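/- Suppose θ_1 ≥ θ_2 ≥ ⋯ ≥ θ_N > 0 and let (S,σ) be an optimal solution of the CMLAPP with optimal value λ* = U(S,σ). Then r_i ≥ λ* for every product i ∈ S; that is, every displayed product's marginal profit is at least the optimal expected profit. -/

import Mathlib

/-
Removing a displayed product `i` keeps the assortment feasible. The optimal profit is the
mediant of `r_i = (r_i w_i) / w_i` and the profit of `S \ {i}`, where `w_i = θ_{σ(i)} u_i > 0`;
a mediant that is at least one of its two fractions is at most the other.
-/

/-- Expected profit `U(S,σ)`. -/
noncomputable def expProfit {N : ℕ} (u r θ : Fin N → ℝ)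
    (S : Finset (Fin N)) (σ : Fin N → Fin N) : ℝ :=
  ∑ i ∈ S, r i * (θ (σ i) * u i / (∑ j ∈ S, θ (σ j) * u j + 1))

theorem add_div_add_le_div_of_div_le {α : Type*} [Field α] [LinearOrder α]
    [IsStrictOrderedRing α] {a b c d : α} (hb : 0 < b) (hd : 0 < d)
    (h : c / d ≤ (a + c) / (b + d)) : (a + c) / (b + d) ≤ a / b := by
  set m := (a + c) / (b + d)
  have hm : m * (b + d) = a + c := div_mul_cancel₀ _ (by positivity)
  have hc : c ≤ m * d := (div_le_iff₀ hd).mp h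
  rw [le_div_iff₀ hb]
  linarith

theorem expProfit_eq_div {N : ℕ} (u r θ : Fin N → ℝ) (S : Finset (Fin N)) (σ : Fin N → Fin N) :
    expProfit u r θ S σ =
      (∑ j ∈ S, r j * (θ (σ j) * u j)) / (∑ j ∈ S, θ (σ j) * u j + 1) := by
  simp only [expProfit, Finset.sum_div, mul_div_assoc]

theorem expProfit_le_of_expProfit_erase_le {N : ℕ} {u r θ : Fin N → ℝ} {S : Finset (Fin N)}
    {σ : Fin N → Fin N} {i : Fin N} (hi : i ∈ S) (hw : ∀ j ∈ S, 0 < θ (σ j) * u j)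
    (h : expProfit u r θ (S.erase i) σ ≤ expProfit u r θ S σ) :
    expProfit u r θ S σ ≤ r i := by
  set w : Fin N → ℝ := fun j => θ (σ j) * u j
  have hwi : 0 < w i := hw i hi
  have hden : 0 < ∑ j ∈ S.erase i, w j + 1 := by
    have : 0 ≤ ∑ j ∈ S.erase i, w j :=
      Finset.sum_nonneg fun j hj => (hw j (Finset.mem_of_mem_erase hj)).le
    linarith
  have hsplit : expProfit u r θ S σ =
      (r i * w i + ∑ j ∈ S.erase i, r j * w j) / (w i + (∑ j ∈ S.erase i, w j + 1)) := by
    rw [expProfit_eq_div, ← Finset.add_sum_erase S _ hi, ← Finset.add_sum_erase S _ hi, add_assoc]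
  rw [expProfit_eq_div, hsplit] at h
  rw [hsplit]
  calc _ ≤ r i * w i / w i := add_div_add_le_div_of_div_le hwi hden h
    _ = r i := mul_div_cancel_right₀ _ hwi.ne'

theorem displayed_profit_ge_optimal_general (N c : ℕ)
    (u r θ : Fin N → ℝ)
    (hu : ∀ i, 0 < u i) (hθpos : ∀ i, 0 < θ i)
    (S : Finset (Fin N)) (σ : Fin N → Fin N)
    (hS : S.card ≤ c) (hσ : Set.InjOn σ ↑S)
    (hopt : ∀ (S' : Finset (Fin N)) (σ' : Fin N → Fin N),
      S'.card ≤ c → Set.InjOn σ' ↑S' →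
      expProfit u r θ S' σ' ≤ expProfit u r θ S σ) :
    ∀ i ∈ S, expProfit u r θ S σ ≤ r i := by
  intro i hi
  have hfeasible := hopt (S.erase i) σ ((Finset.card_erase_le).trans hS)
    (hσ.mono (Finset.coe_subset.mpr (Finset.erase_subset i S)))
  exact expProfit_le_of_expProfit_erase_le hi (fun j _ => mul_pos (hθpos _) (hu j)) hfeasible

/-- if `(S,σ)` is an optimal CMLAPP solution with optimal value
`λ* = U(S,σ)`, then `r_i ≥ λ*` for every displayed product `i ∈ S`. -/
theorem displayed_profit_ge_optimal (N c : ℕ) (hc : c ≤ N)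
    (u r θ : Fin N → ℝ)
    (hu : ∀ i, 0 < u i) (hθpos : ∀ i, 0 < θ i)
    (hθ : ∀ i j : Fin N, i ≤ j → θ j ≤ θ i)
    (S : Finset (Fin N)) (σ : Fin N → Fin N)
    (hS : S.card ≤ c) (hσ : Set.InjOn σ ↑S)
    (hopt : ∀ (S' : Finset (Fin N)) (σ' : Fin N → Fin N),
      S'.card ≤ c → Set.InjOn σ' ↑S' →
      expProfit u r θ S' σ' ≤ expProfit u r θ S σ) :
    ∀ i ∈ S, expProfit u r θ S σ ≤ r i :=
  displayed_profit_ge_optimal_general N c u r θ hu hθpos S σ hS hσ hopt
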